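/- arXiv:2012.03549 — 2 statements merged into one kernel-verified Lean document; each statement's English description precedes it below -/
import Mathlib

section
/- Let m, k ≥ 1, let v : ℝ^k → ℝ^m be Borel measurable, and let μ be a finite positive Borel measure on ℝ^m × ℝ^k such that for every s ∈ ℝ the map Φ_s(x, ξ) := (x + s·v(ξ), ξ) preserves μ, i.e. the pushforward (Φ_s)_*μ equals μ. Then μ({(x, ξ) ∈ ℝ^m × ℝ^k : v(ξ) ≠ 0}) = 0; in particular, if v(ξ) ≠ 0 for every ξ ∈ ℝ^k, then μ = 0. -/
/-!
Fix a linear functional `ℓ`, such as a coordinate of `ℝ^m`. On the set where `ℓ (v ξ) ≠ 0`, the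
phase `ℓ x / ℓ (v ξ)` increases by exactly `n` along the `n`-th iterate of the unit shear
`(x, ξ) ↦ (x + v ξ, ξ)`. So no point of a level set of the phase's integer part ever returns to
that level set. Poincaré recurrence, however, forces returns from every set of positive measure,
because the unit shear preserves the finite measure `μ`. These countably many level sets are
therefore null, and so is their union.
-/

open MeasureTheory

section Recurrence

variable {X : Type*} [MeasurableSpace X] {μ : Measure X} {T : X → X}

theorem MeasureTheory.Conservative.measure_eq_zero_of_iterate_eq_add (hT : Conservative T μ)
    {f : X → ℝ} (hf : Measurable f) {S : Set X} (hS : MeasurableSet S)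
    (hfT : ∀ x ∈ S, ∀ n : ℕ, f (T^[n] x) = f x + n) : μ S = 0 := by
  have hcover : S ⊆ ⋃ j : ℤ, S ∩ f ⁻¹' (Int.floor ⁻¹' {j}) := fun x hx =>
    Set.mem_iUnion.2 ⟨⌊f x⌋, hx, rfl⟩
  refine measure_mono_null hcover (measure_iUnion_null fun j => ?_)
  by_contra hpos
  obtain ⟨x, ⟨hxS, hxj⟩, m, hm, -, hTxj⟩ := hT.exists_mem_iterate_mem
    (hS.inter (hf (Int.measurable_floor (measurableSet_singleton j)))).nullMeasurableSet hpos
  have hfloor : ⌊f x⌋ + m = ⌊f x⌋ := by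
    rw [← Int.floor_add_natCast, ← hfT x hxS m]
    exact hTxj.trans hxj.symm
  omega

end Recurrence

section Shear

variable {E Ξ : Type*} [AddCommGroup E] [Module ℝ E]

def shear (v : Ξ → E) (s : ℝ) (q : E × Ξ) : E × Ξ :=
  (q.1 + s • v q.2, q.2)

theorem shear_iterate_one (v : Ξ → E) (n : ℕ) : (shear v 1)^[n] = shear v n := by
  induction n with
  | zero => funext q; simp [shear]
  | succ n ih =>
    rw [Function.iterate_succ', ih]
    funext q
    simp [shear, add_smul, add_assoc]

theorem measure_apply_ne_zero_eq_zero_of_conservative_shear [MeasurableSpace E]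
    [MeasurableSpace Ξ] (ℓ : E →ₗ[ℝ] ℝ) (hℓ : Measurable ℓ)
    {v : Ξ → E} (hv : Measurable v) {μ : Measure (E × Ξ)} (hT : Conservative (shear v 1) μ) :
    μ {q | ℓ (v q.2) ≠ 0} = 0 := by
  have hℓv : Measurable fun q : E × Ξ => ℓ (v q.2) := hℓ.comp (hv.comp measurable_snd)
  refine hT.measure_eq_zero_of_iterate_eq_add ((hℓ.comp measurable_fst).div hℓv)
    (hℓv (measurableSet_singleton 0)).compl fun q hq n => ?_
  rw [shear_iterate_one]
  change ℓ (q.1 + (n : ℝ) • v q.2) / ℓ (v q.2) = ℓ q.1 / ℓ (v q.2) + n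
  rw [map_add, map_smul, smul_eq_mul, add_div, mul_div_cancel_right₀ _ hq]

end Shear

theorem statement9_general (m k : ℕ)
    (v : (Fin k → ℝ) → (Fin m → ℝ)) (hv : Measurable v)
    (μ : Measure ((Fin m → ℝ) × (Fin k → ℝ))) [IsFiniteMeasure μ]
    (hinv : ∀ s : ℝ,
      Measure.map (fun q : (Fin m → ℝ) × (Fin k → ℝ) => (q.1 + s • v q.2, q.2)) μ = μ) :
    μ {q : (Fin m → ℝ) × (Fin k → ℝ) | v q.2 ≠ 0} = 0 := by
  have hT : Conservative (shear v 1) μ :=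
    (MeasurePreserving.mk (by fun_prop) (hinv 1)).conservative
  have hcover : {q : (Fin m → ℝ) × (Fin k → ℝ) | v q.2 ≠ 0} ⊆
      ⋃ i, {q | LinearMap.proj (R := ℝ) i (v q.2) ≠ 0} := fun q hq => by
    obtain ⟨i, hi⟩ := Function.ne_iff.1 hq
    exact Set.mem_iUnion.2 ⟨i, hi⟩
  exact measure_mono_null hcover <| measure_iUnion_null fun i =>
    measure_apply_ne_zero_eq_zero_of_conservative_shear _ (measurable_pi_apply i) hv hT

/-- **Finite measures invariant under free transport do not charge the set where the
velocity is non-zero.**  If `μ` is a finite positive Borel measure on `ℝ^m × ℝ^k` invariant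
under `Φ_s(x,ξ) = (x + s·v(ξ), ξ)` for every `s ∈ ℝ`, then `μ{(x,ξ) : v(ξ) ≠ 0} = 0`. -/
theorem statement9 (m k : ℕ) (hm : 1 ≤ m) (hk : 1 ≤ k)
    (v : (Fin k → ℝ) → (Fin m → ℝ)) (hv : Measurable v)
    (μ : Measure ((Fin m → ℝ) × (Fin k → ℝ))) [IsFiniteMeasure μ]
    (hinv : ∀ s : ℝ,
      Measure.map (fun q : (Fin m → ℝ) × (Fin k → ℝ) => (q.1 + s • v q.2, q.2)) μ = μ) :
    μ {q : (Fin m → ℝ) × (Fin k → ℝ) | v q.2 ≠ 0} = 0 :=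
  statement9_general m k v hv μ hinv
end

section
/- Let k ∈ ℤ, let Δ : ℝ → ℝ be twice differentiable on a neighborhood of the point ρ(kπ), and let ρ : ℝ → ℝ be differentiable on a neighborhood of kπ with ρ′ differentiable at kπ and ρ′(kπ) = 0. Suppose Δ(ρ(ξ)) = 2·cos ξ for all ξ in a neighborhood of kπ. Then Δ′(ρ(kπ)) · ρ″(kπ) = 2·(−1)^{k+1}; in particular ρ″(kπ) ≠ 0 and Δ′(ρ(kπ)) ≠ 0. -/
open Real Filter Topology

/-! Differentiating `Δ (ρ ξ) = 2 cos ξ` once gives `Δ′(ρ ξ) ρ′(ξ) = -2 sin ξ` near `kπ`; differentiating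
again at `kπ`, the term `(Δ′ ∘ ρ)′ · ρ′` dies because `ρ′(kπ) = 0`, leaving
`Δ′(ρ(kπ)) ρ″(kπ) = -2 cos kπ`, which is nonzero. -/

theorem deriv_deriv_comp_of_deriv_eq_zero {𝕜 : Type*} [NontriviallyNormedField 𝕜]
    {g f : 𝕜 → 𝕜} {x : 𝕜}
    (hg : ∀ᶠ ξ in 𝓝 x, DifferentiableAt 𝕜 g (f ξ)) (hg' : DifferentiableAt 𝕜 (deriv g) (f x))
    (hf : ∀ᶠ ξ in 𝓝 x, DifferentiableAt 𝕜 f ξ) (hf' : DifferentiableAt 𝕜 (deriv f) x)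
    (hcrit : deriv f x = 0) :
    deriv (deriv (g ∘ f)) x = deriv g (f x) * deriv (deriv f) x := by
  have hchain : deriv (g ∘ f) =ᶠ[𝓝 x] fun ξ ↦ deriv g (f ξ) * deriv f ξ := by
    filter_upwards [hg, hf] with ξ hgξ hfξ using deriv_comp ξ hgξ hfξ
  have hg'f : DifferentiableAt 𝕜 (fun ξ ↦ deriv g (f ξ)) x := hg'.comp x hf.self_of_nhds
  rw [hchain.deriv_eq, deriv_fun_mul hg'f hf', hcrit, mul_zero, zero_add]

theorem deriv_deriv_const_mul_cos (c x : ℝ) :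
    deriv (deriv fun ξ ↦ c * cos ξ) x = -(c * cos x) := by
  simp

/-- **Non-degeneracy of critical points of 1D Bloch energies.**  If `Δ(ρ(ξ)) = 2 cos ξ`
near `kπ`, with `Δ` twice differentiable near `ρ(kπ)`, `ρ` differentiable near `kπ`,
`ρ′` differentiable at `kπ` and `ρ′(kπ) = 0`, then
`Δ′(ρ(kπ)) · ρ″(kπ) = 2·(−1)^{k+1}`; in particular `ρ″(kπ) ≠ 0` and `Δ′(ρ(kπ)) ≠ 0`. -/
theorem statement14 (Δ ρ : ℝ → ℝ) (k : ℤ)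
    (hΔ : ∀ᶠ y in nhds (ρ ((k : ℝ) * π)), DifferentiableAt ℝ Δ y ∧
      DifferentiableAt ℝ (deriv Δ) y)
    (hρ : ∀ᶠ ξ in nhds ((k : ℝ) * π), DifferentiableAt ℝ ρ ξ)
    (hρ' : DifferentiableAt ℝ (deriv ρ) ((k : ℝ) * π))
    (hcrit : deriv ρ ((k : ℝ) * π) = 0)
    (heq : ∀ᶠ ξ in nhds ((k : ℝ) * π), Δ (ρ ξ) = 2 * Real.cos ξ) :
    deriv Δ (ρ ((k : ℝ) * π)) * deriv (deriv ρ) ((k : ℝ) * π) = 2 * (-1 : ℝ) ^ (k + 1) ∧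
      deriv (deriv ρ) ((k : ℝ) * π) ≠ 0 ∧ deriv Δ (ρ ((k : ℝ) * π)) ≠ 0 := by
  have hΔρ := hρ.self_of_nhds.continuousAt.eventually hΔ
  have hcos : Δ ∘ ρ =ᶠ[𝓝 (k * π)] fun ξ ↦ 2 * cos ξ := heq
  have hsecond : deriv Δ (ρ (k * π)) * deriv (deriv ρ) (k * π) = 2 * (-1 : ℝ) ^ (k + 1) := by
    rw [← deriv_deriv_comp_of_deriv_eq_zero (hΔρ.mono fun _ ↦ And.left) hΔ.self_of_nhds.2 hρ hρ'
      hcrit, hcos.deriv.deriv_eq, deriv_deriv_const_mul_cos,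
      cos_int_mul_pi, zpow_add_one₀ (by norm_num)]
    ring
  have hne : deriv Δ (ρ (k * π)) * deriv (deriv ρ) (k * π) ≠ 0 := by
    rw [hsecond]
    exact mul_ne_zero two_ne_zero (zpow_ne_zero _ (by norm_num))
  exact ⟨hsecond, right_ne_zero_of_mul hne, left_ne_zero_of_mul hne⟩
end
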